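/- Let γ be a simple closed curve in ℝᵈ (d ≥ 4 or d = 3) such that for i = 1, 2, 3 the i-th coordinate shadow πᵢ(γ) is a simple path (homeomorphic image of [0,1]). Then there is no point q₀ on γ such that πᵢ(q₀) is an endpoint of the path πᵢ(γ) for all three indices i = 1, 2, 3. -/

import Mathlib

/-!
Lift each shadow `πⱼ ∘ γ` through its arc to a map `gⱼ : S¹ → [0,1]`, normalised so that the
given point `z` goes to `0`. For `j ≠ k` the pair `(gⱼ, gₖ)` is injective, because the two
shadows determine the point, and any coordinate `m` other than the `j`-th and `k`-th is a
function `A` of `gⱼ` and also a function `B` of `gₖ`. So `(gⱼ, gₖ)` is an injective loop in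
the closed quadrant based at the origin along which `A (gⱼ) = B (gₖ)`. Such a function is
constant: if it rose above `A 0` somewhere, pick a level `c` in between; the first and the last
time the loop reaches level `c` it sits at `(u, v)`, where `u` and `v` are the first points at
which `A` and `B` reach `c`, contradicting injectivity. With three shadows every coordinate
avoids some pair, so `γ` is constant, which is absurd.
-/

open Real unitInterval

/-- Orthogonal projection of `ℝᵈ` onto the coordinate hyperplane `{x : xᵢ = 0}`. -/
noncomputable def coordProj {d : ℕ} (i : Fin d) (x : EuclideanSpace ℝ (Fin d)) :
    EuclideanSpace ℝ (Fin d) :=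
  WithLp.toLp 2 (Function.update x i 0)

open Set Function Topology

section Loop

variable {U V A B : ℝ → ℝ} {a b c t u v : ℝ}

theorem exists_isLeast_sep_eq {g : ℝ → ℝ} {s : Set ℝ} (hs : IsClosed s) (hs_bdd : BddBelow s)
    (hg : ContinuousOn g s) (hne : ∃ x ∈ s, g x = c) : ∃ t, IsLeast {x ∈ s | g x = c} t :=
  ⟨_, (hg.preimage_isClosed_of_isClosed hs isClosed_singleton).isLeast_csInf hne
    (hs_bdd.mono inter_subset_left)⟩

theorem exists_isLeast_Icc_eq {g : ℝ → ℝ} (hg : ContinuousOn g (Icc a b)) (hab : a ≤ b)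
    (hc : c ∈ Icc (g a) (g b)) : ∃ t, IsLeast {s ∈ Icc a b | g s = c} t :=
  exists_isLeast_sep_eq isClosed_Icc bddBelow_Icc hg (intermediate_value_Icc hab hg hc)

theorem exists_isLeast_Ici_eq {x : ℝ} (hA : ContinuousOn A (Ici a)) (hax : a ≤ x)
    (hc : c ∈ Icc (A a) (A x)) : ∃ u, IsLeast {y ∈ Ici a | A y = c} u := by
  refine exists_isLeast_sep_eq isClosed_Ici bddBelow_Ici hA ?_
  obtain ⟨y, hy, hAy⟩ := intermediate_value_Icc hax (hA.mono Icc_subset_Ici_self) hc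
  exact ⟨y, hy.1, hAy⟩

theorem apply_eq_of_isLeast_of_isLeast (hU : ContinuousOn U (Icc a b)) (hUa : U a = 0)
    (hU_nonneg : ∀ s, 0 ≤ U s) (ht : IsLeast {s ∈ Icc a b | A (U s) = c} t)
    (hu : IsLeast {x ∈ Ici 0 | A x = c} u) : U t = u := by
  obtain ⟨⟨hat, htb⟩, hAt⟩ := ht.1
  refine le_antisymm ?_ (hu.2 ⟨hU_nonneg t, hAt⟩)
  by_contra! hlt
  obtain ⟨s, ⟨has, hst⟩, hUs⟩ := intermediate_value_Icc hat (hU.mono (Icc_subset_Icc_right htb))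
    ⟨hUa ▸ hu.1.1, hlt.le⟩
  have hts : t ≤ s := ht.2 ⟨⟨has, hst.trans htb⟩, hUs ▸ hu.1.2⟩
  obtain rfl := le_antisymm hst hts
  exact hlt.ne' hUs

theorem prodMk_eq_of_isLeast (hU : Continuous U) (hV : Continuous V) (hUa : U a = 0)
    (hVa : V a = 0) (hU_nonneg : ∀ s, 0 ≤ U s) (hV_nonneg : ∀ s, 0 ≤ V s)
    (hAB : ∀ s, A (U s) = B (V s)) (ht : IsLeast {s ∈ Icc a b | A (U s) = c} t)
    (hu : IsLeast {x ∈ Ici 0 | A x = c} u) (hv : IsLeast {x ∈ Ici 0 | B x = c} v) :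
    (U t, V t) = (u, v) := by
  refine Prod.ext (apply_eq_of_isLeast_of_isLeast hU.continuousOn hUa hU_nonneg ht hu)
    (apply_eq_of_isLeast_of_isLeast (b := b) hV.continuousOn hVa hV_nonneg ?_ hv)
  simpa only [hAB] using ht

theorem le_of_injOn_loop (hU : Continuous U) (hV : Continuous V) (hA : Continuous A)
    (hB : Continuous B) (hU_nonneg : ∀ s, 0 ≤ U s) (hV_nonneg : ∀ s, 0 ≤ V s)
    (hU0 : U 0 = 0) (hU1 : U 1 = 0) (hV0 : V 0 = 0) (hV1 : V 1 = 0)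
    (hAB : ∀ s, A (U s) = B (V s)) (hinj : InjOn (fun s => (U s, V s)) (Ico 0 1))
    {τ : ℝ} (hτ : τ ∈ Ioo 0 1) : A (U τ) ≤ A 0 := by
  by_contra! hlt
  obtain ⟨c, hc₀, hcτ⟩ := exists_between hlt
  obtain ⟨u, hu⟩ : ∃ u, IsLeast {x ∈ Ici 0 | A x = c} u :=
    exists_isLeast_Ici_eq hA.continuousOn (hU_nonneg τ) ⟨hc₀.le, hcτ.le⟩
  obtain ⟨v, hv⟩ : ∃ v, IsLeast {x ∈ Ici 0 | B x = c} v :=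
    exists_isLeast_Ici_eq hB.continuousOn (hV_nonneg τ)
      (by rw [← hAB, ← hV0, ← hAB, hU0]; exact ⟨hc₀.le, hcτ.le⟩)
  -- `t₁` and `1 - t₂` are the first and the last time the loop reaches level `c`.
  obtain ⟨t₁, ht₁⟩ : ∃ t, IsLeast {s ∈ Icc 0 τ | A (U s) = c} t :=
    exists_isLeast_Icc_eq (hA.comp hU).continuousOn hτ.1.le
      (by simp only [hU0]; exact ⟨hc₀.le, hcτ.le⟩)
  obtain ⟨t₂, ht₂⟩ : ∃ t, IsLeast {s ∈ Icc 0 (1 - τ) | A (U (1 - s)) = c} t :=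
    exists_isLeast_Icc_eq (g := fun s => A (U (1 - s))) (by fun_prop) (by linarith [hτ.2])
      (by simp only [sub_zero, sub_sub_cancel, hU1]; exact ⟨hc₀.le, hcτ.le⟩)
  have h₁ : (U t₁, V t₁) = (u, v) :=
    prodMk_eq_of_isLeast hU hV hU0 hV0 hU_nonneg hV_nonneg hAB ht₁ hu hv
  have h₂ : (U (1 - t₂), V (1 - t₂)) = (u, v) :=
    prodMk_eq_of_isLeast (U := fun s => U (1 - s)) (V := fun s => V (1 - s)) (by fun_prop)
      (by fun_prop) (by simpa using hU1) (by simpa using hV1) (fun _ => hU_nonneg _)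
      (fun _ => hV_nonneg _) (fun _ => hAB _) ht₂ hu hv
  have ht₁τ : t₁ < τ := ht₁.1.1.2.lt_of_ne fun h => hcτ.ne (h ▸ ht₁.1.2).symm
  have ht₂τ : t₂ < 1 - τ := ht₂.1.1.2.lt_of_ne fun h => hcτ.ne (by simpa [h] using ht₂.1.2.symm)
  have ht₂0 : 0 < t₂ := ht₂.1.1.1.lt_of_ne fun h => hc₀.ne (by simpa [← h, hU1] using ht₂.1.2)
  have ht₁₂ : t₁ = 1 - t₂ :=
    hinj ⟨ht₁.1.1.1, by linarith [hτ.2]⟩ ⟨by linarith [hτ.1], by linarith⟩ (h₁.trans h₂.symm)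
  linarith

end Loop

namespace Circle

instance : Nontrivial Circle :=
  ⟨1, -1, fun h => by norm_num [← coe_inj] at h⟩

theorem injOn_exp_two_pi_mul_mul (z : Circle) :
    InjOn (fun t : ℝ => exp (2 * π * t) * z) (Ico 0 1) := by
  intro s hs t ht hst
  have h2π : 0 < 2 * π := by positivity
  have := exp_injOn_Ico (a := 0) (b := 2 * π) (by simp)
    ⟨by nlinarith [hs.1], by nlinarith [hs.2]⟩ ⟨by nlinarith [ht.1], by nlinarith [ht.2]⟩
    (mul_right_cancel hst)
  exact mul_left_cancel₀ h2π.ne' this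

theorem exists_mem_Ioo_exp_two_pi_mul_mul_eq {z θ : Circle} (hθ : θ ≠ z) :
    ∃ τ ∈ Ioo (0 : ℝ) 1, exp (2 * π * τ) * z = θ := by
  have h2π : 0 < 2 * π := by positivity
  refine ⟨angleDiff z θ / (2 * π), ⟨div_pos (angleDiff_pos hθ.symm) h2π, ?_⟩, ?_⟩
  · exact (div_lt_one h2π).2 (angleDiff_lt_two_pi z θ)
  · rw [mul_div_cancel₀ _ h2π.ne', exp_angleDiff_mul]

theorem apply_eq_of_injective_prodMk {g₁ g₂ : Circle → ℝ} (hg₁ : Continuous g₁)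
    (hg₂ : Continuous g₂) (hg₁_nonneg : ∀ θ, 0 ≤ g₁ θ) (hg₂_nonneg : ∀ θ, 0 ≤ g₂ θ) {z : Circle}
    (hg₁z : g₁ z = 0) (hg₂z : g₂ z = 0) (hinj : Injective fun θ => (g₁ θ, g₂ θ))
    {A B : ℝ → ℝ} (hA : Continuous A) (hB : Continuous B) (hAB : ∀ θ, A (g₁ θ) = B (g₂ θ))
    (θ : Circle) : A (g₁ θ) = A 0 := by
  rcases eq_or_ne θ z with rfl | hθ
  · rw [hg₁z]
  set P : ℝ → Circle := fun t => exp (2 * π * t) * z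
  have hP : Continuous P := by fun_prop
  have hP0 : P 0 = z := by simp [P]
  have hP1 : P 1 = z := by simp [P]
  obtain ⟨τ, hτ, rfl⟩ := exists_mem_Ioo_exp_two_pi_mul_mul_eq hθ
  have key : ∀ A B : ℝ → ℝ, Continuous A → Continuous B → (∀ θ, A (g₁ θ) = B (g₂ θ)) →
      A (g₁ (P τ)) ≤ A 0 := fun A B hA hB hAB =>
    le_of_injOn_loop (hg₁.comp hP) (hg₂.comp hP) hA hB (fun _ => hg₁_nonneg _)
      (fun _ => hg₂_nonneg _) (by simp [hP0, hg₁z]) (by simp [hP1, hg₁z]) (by simp [hP0, hg₂z])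
      (by simp [hP1, hg₂z]) (fun _ => hAB _) (hinj.comp_injOn (injOn_exp_two_pi_mul_mul z)) hτ
  exact le_antisymm (key A B hA hB hAB)
    (neg_le_neg_iff.1 (key (-A) (-B) hA.neg hB.neg fun θ => congrArg Neg.neg (hAB θ)))

end Circle

section CoordProj

variable {d : ℕ}

theorem coordProj_apply_of_ne {i m : Fin d} (hm : m ≠ i) (x : EuclideanSpace ℝ (Fin d)) :
    coordProj i x m = x m :=
  update_of_ne hm 0 x

theorem continuous_coordProj (i : Fin d) : Continuous (coordProj i) :=
  (PiLp.continuous_toLp 2 _).comp ((PiLp.continuous_ofLp 2 _).update i continuous_const)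

theorem eq_of_coordProj_eq_of_coordProj_eq {i i' : Fin d} (hii' : i ≠ i')
    {x y : EuclideanSpace ℝ (Fin d)} (h : coordProj i x = coordProj i y)
    (h' : coordProj i' x = coordProj i' y) : x = y := by
  ext m
  by_cases hm : m = i
  · subst hm
    simpa only [coordProj_apply_of_ne hii'] using congrArg (· m) h'
  · simpa only [coordProj_apply_of_ne hm] using congrArg (· m) h

end CoordProj

theorem Topology.IsEmbedding.exists_continuous_lift_eq_zero {X Z : Type*} [TopologicalSpace X]
    [TopologicalSpace Z] {e : I → Z} (he : IsEmbedding e) {f : X → Z} (hf : Continuous f)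
    (hfe : range f ⊆ range e) {z : X} (hz : f z = e 0 ∨ f z = e 1) :
    ∃ (e' : I → Z) (g : X → I),
      Continuous e' ∧ Continuous g ∧ (∀ x, e' (g x) = f x) ∧ g z = 0 := by
  choose g hg using fun x => hfe (mem_range_self x)
  have hg_cont : Continuous g := he.isInducing.continuous_iff.2 (by simpa [comp_def, hg])
  rcases hz with hz | hz
  · exact ⟨e, g, he.continuous, hg_cont, hg, he.injective ((hg z).trans hz)⟩
  · refine ⟨e ∘ σ, σ ∘ g, he.continuous.comp continuous_symm, continuous_symm.comp hg_cont,
      fun x => by simp [hg], ?_⟩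
    simp [he.injective ((hg z).trans hz)]

theorem apply_eq_of_coordProj_lifts {d : ℕ} {γ : Circle → EuclideanSpace ℝ (Fin d)}
    (hγ : Injective γ) {i i' m : Fin d} (hii' : i ≠ i') (hmi : m ≠ i) (hmi' : m ≠ i')
    {e e' : I → EuclideanSpace ℝ (Fin d)} (he : Continuous e) (he' : Continuous e')
    {g g' : Circle → I} (hg : Continuous g) (hg' : Continuous g')
    (hge : ∀ θ, e (g θ) = coordProj i (γ θ)) (hge' : ∀ θ, e' (g' θ) = coordProj i' (γ θ))
    {z : Circle} (hgz : g z = 0) (hgz' : g' z = 0) (θ : Circle) : γ θ m = γ z m := by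
  set A : ℝ → ℝ := fun x => IccExtend zero_le_one e x m
  set B : ℝ → ℝ := fun x => IccExtend zero_le_one e' x m
  have hA : ∀ θ, A (g θ) = γ θ m := fun θ => by
    simp only [A, IccExtend_val, hge, coordProj_apply_of_ne hmi]
  have hB : ∀ θ, B (g' θ) = γ θ m := fun θ => by
    simp only [B, IccExtend_val, hge', coordProj_apply_of_ne hmi']
  have hinj : Injective fun θ => ((g θ : ℝ), (g' θ : ℝ)) := fun θ θ' h => by
    simp only [Prod.mk.injEq, Subtype.val_inj] at h
    refine hγ (eq_of_coordProj_eq_of_coordProj_eq hii' ?_ ?_)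
    · rw [← hge, ← hge, h.1]
    · rw [← hge', ← hge', h.2]
  have hA_const := Circle.apply_eq_of_injective_prodMk (continuous_subtype_val.comp hg)
    (continuous_subtype_val.comp hg') (fun θ => (g θ).2.1) (fun θ => (g' θ).2.1)
    (congrArg Subtype.val hgz) (congrArg Subtype.val hgz') hinj
    (by fun_prop) (by fun_prop) (fun θ => (hA θ).trans (hB θ).symm) θ
  rw [← hA, ← hA, hgz]
  exact hA_const

theorem Nat.exists_ne_pair_fin_three (n : ℕ) :
    ∃ j k : Fin 3, j ≠ k ∧ n ≠ j ∧ n ≠ k := by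
  obtain h | h | h : n = 0 ∨ n = 1 ∨ 2 ≤ n := by omega
  · exact ⟨1, 2, by decide, by simp [h], by simp [h]⟩
  · exact ⟨0, 2, by decide, by simp [h], by simp [h]⟩
  · exact ⟨0, 1, by decide, by simp; omega, by simp; omega⟩

/-- If `γ` is a simple closed curve in `ℝᵈ` whose first three coordinate shadows are
simple paths (parameterized by embeddings `lam j` of the unit interval), then there is no
point of the curve projecting to an endpoint of each of the three paths. -/
theorem no_common_endpoint_point (d : ℕ) (hd : 3 ≤ d)
    (γ : Circle → EuclideanSpace ℝ (Fin d)) (hγ : Topology.IsEmbedding γ)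
    (lam : Fin 3 → I → EuclideanSpace ℝ (Fin d))
    (hlam : ∀ j : Fin 3, Topology.IsEmbedding (lam j))
    (hrange : ∀ j : Fin 3,
      Set.range (lam j) = coordProj ⟨j, lt_of_lt_of_le j.isLt hd⟩ '' Set.range γ) :
    ¬ ∃ z : Circle, ∀ j : Fin 3,
        coordProj ⟨j, lt_of_lt_of_le j.isLt hd⟩ (γ z) = lam j 0 ∨
        coordProj ⟨j, lt_of_lt_of_le j.isLt hd⟩ (γ z) = lam j 1 := by
  rintro ⟨z, hz⟩
  choose e g he hg hge hgz using fun j => (hlam j).exists_continuous_lift_eq_zero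
    ((continuous_coordProj _).comp hγ.continuous) (by rw [range_comp, hrange j]) (hz j)
  have hconst : ∀ θ, γ θ = γ z := fun θ => by
    ext m
    obtain ⟨j, k, hjk, hmj, hmk⟩ := Nat.exists_ne_pair_fin_three m
    exact apply_eq_of_coordProj_lifts hγ.injective (Fin.ne_of_val_ne (Fin.val_ne_of_ne hjk :))
      (Fin.ne_of_val_ne hmj) (Fin.ne_of_val_ne hmk) (he j) (he k) (hg j) (hg k) (hge j) (hge k)
      (hgz j) (hgz k) θ
  obtain ⟨θ, hθ⟩ := exists_ne z
  exact hθ (hγ.injective (hconst θ))
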